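/- If χ : G → ℝ lies in the topological closure (in ℝ^G with the product/sup topology) of the set X of Gaussian pushforwards on a finite abelian group G, and χ(0) > 0, then for all g₁, g₂ ∈ G: χ(g₁)·χ(g₂)/χ(0) ≤ (χ(g₁ + g₂) + χ(g₁ − g₂))/2. -/

import Mathlib

/-!
Write `χ g = ∑_{k ∈ K} ρ (x_g + k)` with `K = ker h` and `h x_g = g`. By the parallelogram law,
`ρ x * ρ y = γ (x + y) * γ (x - y)` with `γ = exp (-(π / 2) ‖·‖²)`, and `(k, l) ↦ (k + l, k - l)` is a
bijection from `K × K` onto the pairs `(p, q)` with `p ≡ q (mod 2K)`. With `α p = γ (x₁ + x₂ + p)` and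
`β p = γ (x₁ - x₂ + p)`, this turns `χ 0 * χ (g₁ + g₂)`, `χ 0 * χ (g₁ - g₂)` and `χ g₁ * χ g₂` into the
sums of `α p * α q`, `β p * β q` and `α p * β q` over such pairs, so that
`χ 0 * (χ (g₁ + g₂) + χ (g₁ - g₂)) - 2 * χ g₁ * χ g₂ = ∑_{c ∈ K / 2K} (∑_{p ∈ c} (α p - β p))² ≥ 0`.
The inequality is closed in `χ`, so it passes to the closure.
-/

open scoped RealInnerProductSpace

/-- A function `χ : G → ℝ` on a finite abelian group is a *Gaussian pushforward* if
there is a lattice `L` (a discrete additive subgroup of a finite-dimensional real inner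
product space) and a group homomorphism `h : L →+ G` such that for every `g`,
`χ g` is the (absolutely convergent) sum of `ρ x = exp (−π ⟨x, x⟩)` over `h ⁻¹ g`. -/
def IsGaussianPushforward {G : Type} [AddCommGroup G] (χ : G → ℝ) : Prop :=
  ∃ (V : Type) (iN : NormedAddCommGroup V),
    letI := iN
    ∃ (iI : InnerProductSpace ℝ V),
      letI := iI
      FiniteDimensional ℝ V ∧
      ∃ (L : AddSubgroup V) (h : L →+ G),
        DiscreteTopology L ∧
        ∀ g : G, HasSum (fun x : {x : L // h x = g} =>
          Real.exp (-Real.pi * ⟪((x : L) : V), ((x : L) : V)⟫)) (χ g)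

lemma HasSum.mul_of_nonneg {ι κ : Type*} {f : ι → ℝ} {g : κ → ℝ} {a b : ℝ} (hf : HasSum f a)
    (hg : HasSum g b) (hf₀ : 0 ≤ f) (hg₀ : 0 ≤ g) :
    HasSum (fun x : ι × κ => f x.1 * g x.2) (a * b) :=
  hf.mul hg (hf.summable.mul_of_nonneg hg.summable hf₀ hg₀)

namespace Function.PullbackSelf

variable {Γ Q : Type*} (σ : Γ → Q)

def equivSigma : σ.PullbackSelf ≃ Σ c : Q, {p // σ p = c} × {p // σ p = c} where
  toFun e := ⟨σ e.1.1, ⟨e.1.1, rfl⟩, ⟨e.1.2, e.2.symm⟩⟩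
  invFun s := ⟨(s.2.1, s.2.2), s.2.1.2.trans s.2.2.2.symm⟩
  left_inv _ := rfl
  right_inv := by
    rintro ⟨c, ⟨p, rfl⟩, ⟨q, hq⟩⟩
    rfl

def swap : σ.PullbackSelf ≃ σ.PullbackSelf :=
  (Equiv.prodComm Γ Γ).subtypeEquiv fun _ => eq_comm

variable {σ}

lemma summable_fiber {f : Γ → ℝ} (hf : ∀ p, 0 < f p)
    (h : Summable fun e : σ.PullbackSelf => f e.1.1 * f e.1.2) (c : Q) :
    Summable fun p : {p // σ p = c} => f p := by
  rcases isEmpty_or_nonempty {p // σ p = c} with _ | ⟨⟨q⟩⟩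
  · exact summable_empty
  have hblock : Summable fun pq : {p // σ p = c} × {p // σ p = c} => f pq.1 * f pq.2 :=
    ((equivSigma σ).symm.summable_iff.mpr h).sigma_factor c
  have hrow : Summable fun p : {p // σ p = c} => f p * f q :=
    hblock.comp_injective (i := fun p => (p, q)) fun _ _ hpq => (Prod.ext_iff.mp hpq).1
  exact (hrow.mul_right (f q)⁻¹).congr fun p => mul_inv_cancel_right₀ (hf q).ne' _

/-- Splitting over the fibers of `σ`, the sum is `∑_c (∑_{σ p = c} f p)²`. -/
lemma hasSum_mul_nonneg {f : Γ → ℝ} {P : ℝ} (hf : ∀ c, Summable fun p : {p // σ p = c} => f p)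
    (h : HasSum (fun e : σ.PullbackSelf => f e.1.1 * f e.1.2) P) : 0 ≤ P := by
  have hσ : HasSum (fun s : Σ c : Q, {p // σ p = c} × {p // σ p = c} => f s.2.1 * f s.2.2) P :=
    (equivSigma σ).symm.hasSum_iff.mpr h
  rw [← hσ.tsum_eq, hσ.summable.tsum_sigma]
  refine tsum_nonneg fun c => ?_
  have hsq := (hf c).hasSum.mul_eq (hf c).hasSum (hσ.summable.sigma_factor c).hasSum
  exact hsq ▸ mul_self_nonneg _

lemma two_mul_le {α β : Γ → ℝ} (hα : ∀ p, 0 < α p) (hβ : ∀ p, 0 < β p) {Pαα Pββ Pαβ : ℝ}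
    (hαα : HasSum (fun e : σ.PullbackSelf => α e.1.1 * α e.1.2) Pαα)
    (hββ : HasSum (fun e : σ.PullbackSelf => β e.1.1 * β e.1.2) Pββ)
    (hαβ : HasSum (fun e : σ.PullbackSelf => α e.1.1 * β e.1.2) Pαβ) :
    2 * Pαβ ≤ Pαα + Pββ := by
  have hβα : HasSum (fun e : σ.PullbackSelf => β e.1.1 * α e.1.2) Pαβ :=
    (swap σ).hasSum_iff.mp (hαβ.congr_fun fun _ => mul_comm _ _)
  have hdiff : HasSum (fun e : σ.PullbackSelf => (α e.1.1 - β e.1.1) * (α e.1.2 - β e.1.2))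
      (Pαα + Pββ - (Pαβ + Pαβ)) :=
    ((hαα.add hββ).sub (hαβ.add hβα)).congr_fun fun _ => by ring
  have := hasSum_mul_nonneg (f := fun p => α p - β p)
    (fun c => (summable_fiber hα hαα.summable c).sub (summable_fiber hβ hββ.summable c)) hdiff
  linarith

end Function.PullbackSelf

section ModTwo

variable {Γ : Type*} [AddCommGroup Γ] [IsAddTorsionFree Γ]

noncomputable def addSubEquivCongrModTwo :
    Γ × Γ ≃ Function.PullbackSelf ((↑) : Γ → Γ ⧸ (nsmulAddMonoidHom 2 : Γ →+ Γ).range) :=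
  Equiv.ofBijective
    (fun kl => ⟨(kl.1 + kl.2, kl.1 - kl.2), QuotientAddGroup.eq.mpr ⟨-kl.2, by
      simp only [nsmulAddMonoidHom_apply, two_nsmul]; abel⟩⟩) <| by
    constructor
    · rintro ⟨k, l⟩ ⟨k', l'⟩ h
      simp only [Subtype.mk.injEq, Prod.mk.injEq] at h
      have hk : k = k' := nsmul_right_injective two_ne_zero <| by
        calc 2 • k = (k + l) + (k - l) := by abel
          _ = (k' + l') + (k' - l') := by rw [h.1, h.2]
          _ = 2 • k' := by abel
      subst hk
      simp [add_left_cancel h.1]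
    · rintro ⟨⟨p, q⟩, hpq⟩
      obtain ⟨m, hm⟩ := QuotientAddGroup.eq.mp hpq
      simp only [nsmulAddMonoidHom_apply, two_nsmul] at hm
      refine ⟨(p + m, -m), Subtype.ext (Prod.ext ?_ ?_)⟩
      · simp
      · calc p + m - -m = p + (m + m) := by abel
          _ = q := by rw [hm]; abel

@[simp]
lemma coe_addSubEquivCongrModTwo_apply (kl : Γ × Γ) :
    (addSubEquivCongrModTwo kl : Γ × Γ) = (kl.1 + kl.2, kl.1 - kl.2) :=
  rfl

end ModTwo

section Gaussian

variable {V : Type*} [NormedAddCommGroup V] [InnerProductSpace ℝ V]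

noncomputable def gaussian (s : ℝ) (x : V) : ℝ := Real.exp (-s * ⟪x, x⟫)

lemma gaussian_pos (s : ℝ) (x : V) : 0 < gaussian s x := Real.exp_pos _

/-- The parallelogram law `|x|² + |y|² = (|x + y|² + |x - y|²) / 2`. -/
lemma gaussian_mul_gaussian (s : ℝ) (x y : V) :
    gaussian s x * gaussian s y = gaussian (s / 2) (x + y) * gaussian (s / 2) (x - y) := by
  simp only [gaussian, ← Real.exp_add, real_inner_add_add_self, real_inner_sub_sub_self]
  ring_nf

variable {Γ : Type*} [AddCommGroup Γ] [IsAddTorsionFree Γ]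

lemma hasSum_congrModTwo_gaussian (ι : Γ →+ V) (s : ℝ) (x y : V) {P : ℝ}
    (h : HasSum (fun kl : Γ × Γ => gaussian s (x + ι kl.1) * gaussian s (y + ι kl.2)) P) :
    HasSum (fun e : Function.PullbackSelf ((↑) : Γ → Γ ⧸ (nsmulAddMonoidHom 2 : Γ →+ Γ).range) =>
      gaussian (s / 2) (x + y + ι e.1.1) * gaussian (s / 2) (x - y + ι e.1.2)) P := by
  refine addSubEquivCongrModTwo.hasSum_iff.mp (h.congr_fun fun kl => ?_)
  simp only [Function.comp_apply, coe_addSubEquivCongrModTwo_apply, map_add, map_sub,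
    gaussian_mul_gaussian s (x + ι kl.1)]
  congr 2 <;> abel

theorem two_mul_mul_le_of_hasSum_gaussian (ι : Γ →+ V) (s : ℝ) (u v : V) {A B C S D : ℝ}
    (hA : HasSum (fun k => gaussian s (u + ι k)) A)
    (hB : HasSum (fun k => gaussian s (v + ι k)) B)
    (hC : HasSum (fun k => gaussian s (ι k)) C)
    (hS : HasSum (fun k => gaussian s (u + v + ι k)) S)
    (hD : HasSum (fun k => gaussian s (u - v + ι k)) D) :
    2 * (A * B) ≤ C * (S + D) := by
  have hpos : ∀ x : V, 0 ≤ gaussian s x := fun x => (gaussian_pos s x).le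
  have hC' : HasSum (fun k => gaussian s (0 + ι k)) C := by simpa only [zero_add] using hC
  have hAB := hA.mul_of_nonneg hB (fun _ => hpos _) fun _ => hpos _
  have hSC := hS.mul_of_nonneg hC' (fun _ => hpos _) fun _ => hpos _
  have hDC := hD.mul_of_nonneg hC' (fun _ => hpos _) fun _ => hpos _
  have hαβ := hasSum_congrModTwo_gaussian ι s u v hAB
  have hαα := hasSum_congrModTwo_gaussian ι s (u + v) 0 hSC
  have hββ := hasSum_congrModTwo_gaussian ι s (u - v) 0 hDC
  simp only [add_zero, sub_zero] at hαα hββ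
  have := Function.PullbackSelf.two_mul_le (α := fun p => gaussian (s / 2) (u + v + ι p))
    (β := fun p => gaussian (s / 2) (u - v + ι p)) (fun _ => gaussian_pos _ _)
    (fun _ => gaussian_pos _ _) hαα hββ hαβ
  linarith

end Gaussian

open Real in
theorem IsGaussianPushforward.two_mul_mul_le {G : Type} [AddCommGroup G] {χ : G → ℝ}
    (hχ : IsGaussianPushforward χ) (g₁ g₂ : G) :
    2 * (χ g₁ * χ g₂) ≤ χ 0 * (χ (g₁ + g₂) + χ (g₁ - g₂)) := by
  obtain ⟨V, _, _, -, L, h, -, hsum⟩ := hχ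
  have : IsAddTorsionFree V := .of_isTorsionFree ℝ V
  have hnonneg : ∀ g, 0 ≤ χ g := fun g => (hsum g).nonneg fun _ => (exp_pos _).le
  have hzero : ∀ g ∉ h.range, χ g = 0 := fun g hg => by
    have : IsEmpty {x : L // h x = g} := ⟨fun x => hg ⟨x, x.2⟩⟩
    exact (hsum g).unique hasSum_empty
  have hker (x : L) : HasSum (fun k : h.ker => gaussian π ((x : V) + ((k : L) : V))) (χ (h x)) :=
    (h.fiberEquivKer x).symm.hasSum_iff.mpr (hsum (h x))
  by_cases hg : g₁ ∈ h.range ∧ g₂ ∈ h.range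
  swap
  · have : χ g₁ * χ g₂ = 0 := by
      rcases not_and_or.mp hg with hg | hg <;> simp [hzero _ hg]
    rw [this, mul_zero]
    exact mul_nonneg (hnonneg _) (add_nonneg (hnonneg _) (hnonneg _))
  obtain ⟨⟨x₁, rfl⟩, ⟨x₂, rfl⟩⟩ := hg
  refine two_mul_mul_le_of_hasSum_gaussian (L.subtype.comp h.ker.subtype) π x₁ x₂ (hker x₁)
    (hker x₂) ?_ ?_ ?_
  · simpa using hker 0
  · simpa using hker (x₁ + x₂)
  · simpa using hker (x₁ - x₂)

/-- Any `χ` in the topological closure of the set of Gaussian pushforwards on a finite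
abelian group (in `G → ℝ` with the product topology), with `χ 0 > 0`, satisfies
`χ g₁ · χ g₂ / χ 0 ≤ (χ (g₁ + g₂) + χ (g₁ − g₂)) / 2`. -/
theorem closure_gaussianPushforward_ineq
    {G : Type} [AddCommGroup G] {χ : G → ℝ}
    (hχ : χ ∈ closure {f : G → ℝ | IsGaussianPushforward f})
    (hχ0 : 0 < χ 0) (g₁ g₂ : G) :
    χ g₁ * χ g₂ / χ 0 ≤ (χ (g₁ + g₂) + χ (g₁ - g₂)) / 2 := by
  have hclosed : IsClosed {f : G → ℝ | 2 * (f g₁ * f g₂) ≤ f 0 * (f (g₁ + g₂) + f (g₁ - g₂))} :=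
    isClosed_le (by fun_prop) (by fun_prop)
  have key : 2 * (χ g₁ * χ g₂) ≤ χ 0 * (χ (g₁ + g₂) + χ (g₁ - g₂)) :=
    closure_minimal (fun f hf => IsGaussianPushforward.two_mul_mul_le hf g₁ g₂) hclosed hχ
  rw [div_le_div_iff₀ hχ0 two_pos]
  linarith
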